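/- Let 2 ≤ j < k ≤ n, and let S be a set of k-element subsets of {1,…,n} such that any two distinct members of S intersect in at most r elements. Let Ā be the submatrix of R^{j,k} consisting of the columns indexed by S, let T ⊆ S be nonempty and T^c = S \ T. If r ≤ (1/(|T|·(1+√|T|)))^{1/j} · k, then Ā_T^*Ā_T is invertible and the irrepresentable condition holds: ‖Ā_{T^c}^* Ā_T (Ā_T^*Ā_T)^{−1}‖_∞ < 1. -/

import Mathlib

/-!
The Gram matrix of the columns of `R^{j,k}` has entries `C(|τ ∩ τ'|, j) / C(k, j)`: ones on the
diagonal and, for distinct members of `S`, at most `C(r, j) / C(k, j) ≤ (r / k)^j ≤ μ`, where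
`μ = 1 / (t (1 + √t))` and `t = |T|`. In the `ℓ∞` operator norm, `Ā_T^* Ā_T = 1 - E` with
`‖E‖ ≤ (t - 1) μ < 1`, so the Neumann series inverts it with
`‖(Ā_T^* Ā_T)⁻¹‖ ≤ 1 / (1 - (t - 1) μ)`, while `‖Ā_{T^c}^* Ā_T‖ ≤ t μ`. The product of the two
bounds is below `1` exactly when `(2t - 1) μ < 1`, i.e. `2t - 1 < t + t √t`.
-/

open scoped Classical
open Finset Matrix

noncomputable section

/-- The normalized Radon matrix `R^{j,k}`: rows are indexed by `j`-element subsets of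
`{1,…,n}`, columns by `k`-element subsets, with entry `1/√(C(k,j))` if the row set is
contained in the column set and `0` otherwise. -/
def radon (n j k : ℕ) :
    Matrix {σ : Finset (Fin n) // σ.card = j} {τ : Finset (Fin n) // τ.card = k} ℝ :=
  fun σ τ => if σ.1 ⊆ τ.1 then 1 / Real.sqrt (k.choose j) else 0

/-- The submatrix of `A` consisting of the columns indexed by `T`. -/
def colSub {m p R : Type*} (A : Matrix m p R) (T : Finset p) :
    Matrix m {x // x ∈ T} R :=
  fun i t => A i t.1

/-- Maximum absolute row sum of a matrix, `‖M‖_∞`. -/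
def matInfNorm {m p : Type*} [Fintype p] (M : Matrix m p ℝ) : ℝ :=
  ⨆ i, ∑ j, |M i j|

/-- Maximum absolute column sum of a matrix, `‖M‖₁`. -/
def matOneNorm {m p : Type*} [Fintype m] (M : Matrix m p ℝ) : ℝ :=
  ⨆ j, ∑ i, |M i j|

/-- `ℓ¹` norm of a vector. -/
def vecOneNorm {m : Type*} [Fintype m] (u : m → ℝ) : ℝ := ∑ i, |u i|

/-- `ℓ^∞` norm of a vector. -/
def vecInfNorm {m : Type*} (u : m → ℝ) : ℝ := ⨆ i, |u i|

theorem norm_inverse_one_sub_le {R : Type*} [NormedRing R] [HasSummableGeomSeries R]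
    [NormOneClass R] {x : R} (h : ‖x‖ < 1) : ‖Ring.inverse (1 - x)‖ ≤ (1 - ‖x‖)⁻¹ := by
  simpa [← geom_series_eq_inverse x h] using tsum_geometric_le_of_norm_lt_one x h

attribute [local instance] Matrix.linftyOpNormedAddCommGroup Matrix.linftyOpNormedRing
  Matrix.linftyOpNormedAlgebra

namespace Matrix

variable {ι κ : Type*} [Fintype ι] [Fintype κ]

theorem matInfNorm_eq_linfty_opNorm (M : Matrix κ ι ℝ) : matInfNorm M = ‖M‖ := by
  simp [matInfNorm, linfty_opNorm_def, sup_univ_eq_ciSup, NNReal.coe_iSup, Real.norm_eq_abs]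

theorem linfty_opNorm_le_of_sum_abs_le {M : Matrix κ ι ℝ} {c : ℝ} (hc : 0 ≤ c)
    (h : ∀ a, ∑ i, |M a i| ≤ c) : ‖M‖ ≤ c := by
  rw [← matInfNorm_eq_linfty_opNorm]
  rcases isEmpty_or_nonempty κ with hκ | hκ
  · simpa [matInfNorm] using hc
  · exact ciSup_le h

theorem linfty_opNorm_le_card_mul {M : Matrix κ ι ℝ} {ε : ℝ} (hε : 0 ≤ ε)
    (h : ∀ a i, |M a i| ≤ ε) : ‖M‖ ≤ Fintype.card ι * ε := by
  refine linfty_opNorm_le_of_sum_abs_le (by positivity) fun a => ?_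
  simpa using Finset.sum_le_card_nsmul univ _ ε fun i _ => h a i

theorem linfty_opNorm_le_card_sub_one_mul [Nonempty ι] {M : Matrix ι ι ℝ} {ε : ℝ}
    (hε : 0 ≤ ε) (hdiag : ∀ i, M i i = 0) (hoff : ∀ i j, i ≠ j → |M i j| ≤ ε) :
    ‖M‖ ≤ (Fintype.card ι - 1) * ε := by
  have hcard : (1 : ℝ) ≤ Fintype.card ι := by exact_mod_cast Fintype.card_pos
  refine linfty_opNorm_le_of_sum_abs_le (by nlinarith) fun i => ?_
  rw [← Finset.sum_erase univ (a := i) (by simp [hdiag])]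
  calc ∑ j ∈ univ.erase i, |M i j|
      ≤ (univ.erase i).card • ε :=
        Finset.sum_le_card_nsmul _ _ ε fun j hj => hoff i j (Finset.ne_of_mem_erase hj).symm
    _ = (Fintype.card ι - 1) * ε := by
        rw [card_erase_of_mem (mem_univ i), card_univ, nsmul_eq_mul,
          Nat.cast_pred Fintype.card_pos]

theorem isUnit_and_matInfNorm_mul_inv_lt_one [DecidableEq ι] [Nonempty ι]
    {G : Matrix ι ι ℝ} {B : Matrix κ ι ℝ} {ε : ℝ} (hε : 0 ≤ ε) (hdiag : ∀ i, G i i = 1)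
    (hG : ∀ i j, i ≠ j → |G i j| ≤ ε) (hB : ∀ a i, |B a i| ≤ ε)
    (hsmall : (2 * Fintype.card ι - 1) * ε < 1) :
    IsUnit G ∧ matInfNorm (B * G⁻¹) < 1 := by
  have ht : (1 : ℝ) ≤ Fintype.card ι := by exact_mod_cast Fintype.card_pos
  set t : ℝ := (Fintype.card ι : ℝ)
  set E := 1 - G
  have hE : ‖E‖ ≤ (t - 1) * ε := linfty_opNorm_le_card_sub_one_mul hε (by simp [E, hdiag])
    fun i j hij => by simpa [E, one_apply_ne hij] using hG i j hij
  have hE1 : ‖E‖ < 1 := by nlinarith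
  have hGE : G = 1 - E := by simp [E]
  refine ⟨hGE ▸ isUnit_one_sub_of_norm_lt_one hE1, ?_⟩
  have hinv : ‖G⁻¹‖ ≤ (1 - (t - 1) * ε)⁻¹ := by
    rw [nonsing_inv_eq_ringInverse, hGE]
    exact (norm_inverse_one_sub_le hE1).trans (inv_anti₀ (by nlinarith) (by linarith))
  calc matInfNorm (B * G⁻¹) = ‖B * G⁻¹‖ := matInfNorm_eq_linfty_opNorm _
    _ ≤ ‖B‖ * ‖G⁻¹‖ := linfty_opNorm_mul _ _
    _ ≤ (t * ε) * (1 - (t - 1) * ε)⁻¹ :=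
        mul_le_mul (linfty_opNorm_le_card_mul hε hB) hinv (norm_nonneg _) (by positivity)
    _ < 1 := by
        rw [← div_eq_mul_inv, div_lt_one (by nlinarith)]
        linarith

end Matrix

theorem Nat.descFactorial_mul_pow_le_descFactorial_mul_pow {r k : ℕ} (h : r ≤ k) :
    ∀ j, r.descFactorial j * k ^ j ≤ k.descFactorial j * r ^ j
  | 0 => by simp
  | j + 1 => by
    have hstep : (r - j) * k ≤ (k - j) * r := by
      rw [Nat.sub_mul, Nat.sub_mul, mul_comm r k]
      exact Nat.sub_le_sub_left (Nat.mul_le_mul_left j h) _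
    calc r.descFactorial (j + 1) * k ^ (j + 1)
        = ((r - j) * k) * (r.descFactorial j * k ^ j) := by
          rw [Nat.descFactorial_succ, pow_succ]; ring
      _ ≤ ((k - j) * r) * (k.descFactorial j * r ^ j) :=
          Nat.mul_le_mul hstep (descFactorial_mul_pow_le_descFactorial_mul_pow h j)
      _ = k.descFactorial (j + 1) * r ^ (j + 1) := by
          rw [Nat.descFactorial_succ, pow_succ]; ring

theorem Nat.choose_mul_pow_le_pow_mul_choose {r k : ℕ} (h : r ≤ k) (j : ℕ) :
    r.choose j * k ^ j ≤ r ^ j * k.choose j := by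
  have := Nat.descFactorial_mul_pow_le_descFactorial_mul_pow h j
  rw [descFactorial_eq_factorial_mul_choose, descFactorial_eq_factorial_mul_choose,
    mul_assoc, mul_assoc, mul_comm _ (r ^ j)] at this
  exact Nat.le_of_mul_le_mul_left this j.factorial_pos

theorem choose_div_choose_le_div_pow {r k : ℕ} (h : r ≤ k) (j : ℕ) :
    (r.choose j : ℝ) / k.choose j ≤ ((r : ℝ) / k) ^ j := by
  rcases Nat.eq_zero_or_pos k with rfl | hk
  · obtain rfl : r = 0 := by omega
    cases j <;> simp
  refine div_le_of_le_mul₀ (by positivity) (by positivity) ?_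
  rw [div_pow, div_mul_eq_mul_div, le_div_iff₀ (by positivity)]
  exact_mod_cast Nat.choose_mul_pow_le_pow_mul_choose h j

theorem card_filter_subset_eq_choose {α : Type*} [Fintype α] [DecidableEq α] (j : ℕ)
    (s : Finset α) :
    #{σ : {σ : Finset α // σ.card = j} | σ.1 ⊆ s} = s.card.choose j := by
  rw [← card_powersetCard]
  refine card_nbij (fun σ => σ.1) (fun σ hσ => ?_) (fun σ _ σ' _ => Subtype.ext)
    fun τ hτ => ?_
  · simpa [mem_powersetCard, σ.2] using hσ
  · rw [mem_coe, mem_powersetCard] at hτ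
    exact ⟨⟨τ, hτ.2⟩, by simp [hτ.1], rfl⟩

theorem colSub_transpose_mul_colSub {m p R : Type*} [Fintype m]
    [NonUnitalNonAssocSemiring R]
    (A : Matrix m p R) (U V : Finset p) :
    (colSub A U)ᵀ * colSub A V = (Aᵀ * A).submatrix Subtype.val Subtype.val :=
  rfl

section Radon

variable {n j k : ℕ}

theorem radon_transpose_mul_radon_apply (τ τ' : {τ : Finset (Fin n) // τ.card = k}) :
    ((radon n j k)ᵀ * radon n j k) τ τ' = ((τ.1 ∩ τ'.1).card.choose j : ℝ) / k.choose j := by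
  have hsq : 1 / √(k.choose j : ℝ) * (1 / √(k.choose j)) = 1 / k.choose j := by
    rw [one_div_mul_one_div, Real.mul_self_sqrt (Nat.cast_nonneg _)]
  simp only [mul_apply, transpose_apply, radon, ite_zero_mul_ite_zero, ← subset_inter_iff,
    hsq]
  rw [sum_ite, sum_const_zero, add_zero, sum_const, card_filter_subset_eq_choose,
    nsmul_eq_mul, mul_one_div]

theorem radon_transpose_mul_radon_apply_self (hjk : j ≤ k)
    (τ : {τ : Finset (Fin n) // τ.card = k}) :
    ((radon n j k)ᵀ * radon n j k) τ τ = 1 := by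
  rw [radon_transpose_mul_radon_apply, inter_self, τ.2,
    div_self (Nat.cast_ne_zero.2 (Nat.choose_pos hjk).ne')]

theorem abs_radon_transpose_mul_radon_apply_le {r : ℕ}
    {τ τ' : {τ : Finset (Fin n) // τ.card = k}} (h : (τ.1 ∩ τ'.1).card ≤ r) :
    |((radon n j k)ᵀ * radon n j k) τ τ'| ≤ ((r : ℝ) / k) ^ j := by
  have hk : (τ.1 ∩ τ'.1).card ≤ k := (card_le_card inter_subset_left).trans_eq τ.2
  rw [radon_transpose_mul_radon_apply, abs_of_nonneg (by positivity)]
  calc _ ≤ (((τ.1 ∩ τ'.1).card : ℝ) / k) ^ j := choose_div_choose_le_div_pow hk j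
    _ ≤ ((r : ℝ) / k) ^ j := by gcongr

end Radon

theorem two_mul_sub_one_lt_mul_one_add_sqrt {t : ℝ} (ht : 1 ≤ t) :
    2 * t - 1 < t * (1 + √t) := by
  nlinarith [Real.one_le_sqrt.2 ht]

theorem stmt13_general (n j k r : ℕ) (hj : 2 ≤ j) (hjk : j < k)
    (S : Finset {τ : Finset (Fin n) // τ.card = k})
    (hS : ∀ σ₁ ∈ S, ∀ σ₂ ∈ S, σ₁ ≠ σ₂ → (σ₁.1 ∩ σ₂.1).card ≤ r)
    (T : Finset {τ : Finset (Fin n) // τ.card = k}) (hTS : T ⊆ S) (hTne : T.Nonempty)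
    (hr : (r : ℝ) ≤
      (1 / ((T.card : ℝ) * (1 + Real.sqrt (T.card : ℝ)))) ^ ((1 : ℝ) / (j : ℝ)) * (k : ℝ)) :
    IsUnit ((colSub (radon n j k) T)ᵀ * colSub (radon n j k) T) ∧
    matInfNorm ((colSub (radon n j k) (S \ T))ᵀ * colSub (radon n j k) T *
      (((colSub (radon n j k) T)ᵀ * colSub (radon n j k) T)⁻¹)) < 1 := by
  have ht : (1 : ℝ) ≤ T.card := by exact_mod_cast hTne.card_pos
  set t : ℝ := (T.card : ℝ)
  set x : ℝ := 1 / (t * (1 + √t))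
  have hx : 0 < x := by positivity
  have hrx : ((r : ℝ) / k) ^ j ≤ x := by
    rw [← div_le_iff₀ (Nat.cast_pos.2 (j.zero_le.trans_lt hjk)), one_div] at hr
    exact_mod_cast (Real.le_rpow_inv_iff_of_pos (by positivity) hx.le
      (Nat.cast_pos.2 (by omega))).1 hr
  have hoverlap : ∀ τ ∈ S, ∀ τ' ∈ S, τ ≠ τ' → |((radon n j k)ᵀ * radon n j k) τ τ'| ≤ x :=
    fun τ hτ τ' hτ' hne =>
      (abs_radon_transpose_mul_radon_apply_le (hS τ hτ τ' hτ' hne)).trans hrx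
  have : Nonempty T := hTne.to_subtype
  rw [colSub_transpose_mul_colSub, colSub_transpose_mul_colSub]
  refine isUnit_and_matInfNorm_mul_inv_lt_one hx.le
    (fun a => radon_transpose_mul_radon_apply_self hjk.le a.1)
    (fun a b hab => hoverlap _ (hTS a.2) _ (hTS b.2) (Subtype.coe_injective.ne hab))
    (fun a b => hoverlap _ (mem_sdiff.1 a.2).1 _ (hTS b.2)
      (ne_of_mem_of_not_mem b.2 (mem_sdiff.1 a.2).2).symm) ?_
  rw [Fintype.card_coe, mul_one_div, div_lt_one (by positivity)]
  exact two_mul_sub_one_lt_mul_one_add_sqrt ht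

/-- restricted-dictionary IRR. `S` is a set of `k`-cliques with pairwise
overlaps at most `r`, `Ā` the corresponding submatrix of `R^{j,k}`, `T ⊆ S` nonempty,
`T^c = S \ T`. If `r ≤ (1/(|T|(1+√|T|)))^(1/j) · k`, then `Ā_T^*Ā_T` is invertible and
the irrepresentable condition holds. -/
theorem stmt13 (n j k r : ℕ) (hj : 2 ≤ j) (hjk : j < k) (hk : k ≤ n)
    (S : Finset {τ : Finset (Fin n) // τ.card = k})
    (hS : ∀ σ₁ ∈ S, ∀ σ₂ ∈ S, σ₁ ≠ σ₂ → (σ₁.1 ∩ σ₂.1).card ≤ r)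
    (T : Finset {τ : Finset (Fin n) // τ.card = k}) (hTS : T ⊆ S) (hTne : T.Nonempty)
    (hr : (r : ℝ) ≤
      (1 / ((T.card : ℝ) * (1 + Real.sqrt (T.card : ℝ)))) ^ ((1 : ℝ) / (j : ℝ)) * (k : ℝ)) :
    IsUnit ((colSub (radon n j k) T)ᵀ * colSub (radon n j k) T) ∧
    matInfNorm ((colSub (radon n j k) (S \ T))ᵀ * colSub (radon n j k) T *
      (((colSub (radon n j k) T)ᵀ * colSub (radon n j k) T)⁻¹)) < 1 :=
  stmt13_general n j k r hj hjk S hS T hTS hTne hr
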